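/- For any d ≥ 5 and any two density matrices ρ, σ on ℂ^d, the von Neumann entropy satisfies |S(ρ) − S(σ)| ≤ d^{1/4} · (π ln d / ln 2) · D_HS(ρ,σ)^{1/2}. In particular, the von Neumann entropy is Hölder-continuous with exponent 1/2 with respect to the Hilbert–Schmidt distance. -/

import Mathlib

open scoped BigOperators ComplexOrder
open Matrix
open Finset

/-- The eigenvalues of a Hermitian matrix, listed in increasing order
(junk value `0` for non-Hermitian matrices). -/
noncomputable def eigsInc {d : ℕ} (A : Matrix (Fin d) (Fin d) ℂ) : Fin d → ℝ :=
  @dite _ A.IsHermitian (Classical.propDecidable _)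
    (fun h => h.eigenvalues ∘ Tuple.sort h.eigenvalues) (fun _ => 0)

/-- The eigenvalues of a Hermitian matrix, listed in decreasing order. -/
noncomputable def eigsDec {d : ℕ} (A : Matrix (Fin d) (Fin d) ℂ) : Fin d → ℝ :=
  fun k => eigsInc A k.rev

/-- Ergotropy `E(ρ,H) = tr(ρH) - ∑ₖ λₖ Eₖ` with `λ` decreasing, `E` increasing. -/
noncomputable def ergotropy {d : ℕ} (ρ H : Matrix (Fin d) (Fin d) ℂ) : ℝ :=
  ((ρ * H).trace).re - ∑ k : Fin d, eigsDec ρ k * eigsInc H k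

/-- Operator norm (ℓ² → ℓ²) of a matrix. -/
noncomputable def opNorm {d : ℕ} (A : Matrix (Fin d) (Fin d) ℂ) : ℝ :=
  ‖Matrix.toEuclideanCLM (𝕜 := ℂ) A‖

/-- The square root `Matrix.PosSemidef.sqrt` of the older Mathlib, spelled out. -/
noncomputable def posSemidefSqrtOld {d : ℕ} {A : Matrix (Fin d) (Fin d) ℂ} (hA : A.PosSemidef) :
    Matrix (Fin d) (Fin d) ℂ :=
  hA.1.eigenvectorUnitary.1 * diagonal ((↑) ∘ (√·) ∘ hA.1.eigenvalues) *
  (star hA.1.eigenvectorUnitary : Matrix (Fin d) (Fin d) ℂ)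

/-- Trace norm `‖A‖₁ = tr √(AᴴA)`. -/
noncomputable def traceNorm {d : ℕ} (A : Matrix (Fin d) (Fin d) ℂ) : ℝ :=
  ((posSemidefSqrtOld (Matrix.posSemidef_conjTranspose_mul_self A)).trace).re

/-- Trace distance. -/
noncomputable def traceDist {d : ℕ} (ρ σ : Matrix (Fin d) (Fin d) ℂ) : ℝ :=
  traceNorm (ρ - σ) / 2

/-- Positive semidefinite square root (junk value `0` on non-PSD matrices). -/
noncomputable def psdSqrt {d : ℕ} (A : Matrix (Fin d) (Fin d) ℂ) : Matrix (Fin d) (Fin d) ℂ :=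
  @dite _ A.PosSemidef (Classical.propDecidable _) (fun h => posSemidefSqrtOld h) (fun _ => 0)

/-- Uhlmann fidelity `F(ρ,σ) = (tr √(√ρ σ √ρ))²`. -/
noncomputable def fidelity {d : ℕ} (ρ σ : Matrix (Fin d) (Fin d) ℂ) : ℝ :=
  ((psdSqrt (psdSqrt ρ * σ * psdSqrt ρ)).trace).re ^ 2

/-- Bures distance. -/
noncomputable def buresDist {d : ℕ} (ρ σ : Matrix (Fin d) (Fin d) ℂ) : ℝ :=
  Real.sqrt (2 - 2 * Real.sqrt (fidelity ρ σ))

/-- Hilbert–Schmidt distance. -/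
noncomputable def hsDist {d : ℕ} (ρ σ : Matrix (Fin d) (Fin d) ℂ) : ℝ :=
  Real.sqrt ((((ρ - σ)ᴴ * (ρ - σ)).trace).re)

/-- von Neumann entropy `S(ρ) = -tr(ρ ln ρ) = -∑ᵢ λᵢ ln λᵢ`. -/
noncomputable def vnEntropy {d : ℕ} (ρ : Matrix (Fin d) (Fin d) ℂ) : ℝ :=
  -∑ i : Fin d, eigsInc ρ i * Real.log (eigsInc ρ i)

/-- `ψ ∈ ℂᵈ ⊗ ℂᵈ` is a purification of `ρ`. -/
def IsPurification {d : ℕ} (ρ : Matrix (Fin d) (Fin d) ℂ)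
    (ψ : EuclideanSpace ℂ (Fin d × Fin d)) : Prop :=
  ‖ψ‖ = 1 ∧ ∀ i j, ρ i j = ∑ k : Fin d, ψ (i, k) * (starRingEnd ℂ) (ψ (j, k))

/-- Partial trace over the second tensor factor of `|ψ⟩⟨ψ|`. -/
noncomputable def partialTrace {d : ℕ} (ψ : EuclideanSpace ℂ (Fin d × Fin d)) :
    Matrix (Fin d) (Fin d) ℂ :=
  Matrix.of fun i j => ∑ k : Fin d, ψ (i, k) * (starRingEnd ℂ) (ψ (j, k))


noncomputable def eta (x : ℝ) : ℝ := -(x * Real.log x)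

lemma eta_zero : eta 0 = 0 := by simp [eta]

lemma eta_nonneg {x : ℝ} (h0 : 0 ≤ x) (h1 : x ≤ 1) : 0 ≤ eta x := by
  have h := Real.log_nonpos h0 h1
  have : x * Real.log x ≤ 0 := mul_nonpos_of_nonneg_of_nonpos h0 h
  simp only [eta]; linarith

lemma eta_le_two_sqrt {x : ℝ} (h0 : 0 ≤ x) : eta x ≤ 2 * Real.sqrt x := by
  rcases h0.eq_or_lt with h | h
  · simp [← h, eta]
  · have hs : 0 < Real.sqrt x := Real.sqrt_pos.mpr h
    have hlog : Real.log x = 2 * Real.log (Real.sqrt x) := by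
      rw [Real.log_sqrt h0]; ring
    have h2 : Real.log (1 / Real.sqrt x) ≤ 1 / Real.sqrt x - 1 :=
      Real.log_le_sub_one_of_pos (by positivity)
    rw [Real.log_div one_ne_zero hs.ne', Real.log_one] at h2
    have hxs : x / Real.sqrt x = Real.sqrt x := Real.div_sqrt
    have h3 : x * (-Real.log (Real.sqrt x)) ≤ x * (1 / Real.sqrt x - 1) :=
      mul_le_mul_of_nonneg_left (by linarith) h0
    have h4 : x * (1 / Real.sqrt x) = Real.sqrt x := by rw [mul_one_div, hxs]
    simp only [eta, hlog]
    nlinarith [hs.le]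

lemma eta_diff_le {x t : ℝ} (hx : 0 ≤ x) (ht : 0 ≤ t) (hxt : x + t ≤ 1) :
    |eta (x + t) - eta x| ≤ eta t + t := by
  have hetat : 0 ≤ eta t := eta_nonneg ht (by linarith)
  have lower : eta x - eta (x + t) ≤ t := by
    rcases hx.eq_or_lt with h | hxpos
    · rw [← h, zero_add, eta_zero]
      linarith [eta_nonneg ht (by linarith : t ≤ 1)]
    · rcases ht.eq_or_lt with h | htpos
      · rw [← h, add_zero]; linarith
      · have hxtpos : 0 < x + t := by linarith
        have hl1 : Real.log ((x+t)/x) ≤ (x+t)/x - 1 := Real.log_le_sub_one_of_pos (by positivity)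
        rw [Real.log_div hxtpos.ne' hxpos.ne'] at hl1
        have hl2 : Real.log (x+t) ≤ 0 := Real.log_nonpos hxtpos.le hxt
        have hx1 : x * (Real.log (x+t) - Real.log x) ≤ t := by
          have h5 := mul_le_mul_of_nonneg_left hl1 hxpos.le
          calc x * (Real.log (x+t) - Real.log x) ≤ x * ((x+t)/x - 1) := h5
            _ = t := by field_simp; ring
        simp only [eta]
        nlinarith [mul_nonneg ht (neg_nonneg.mpr hl2)]
  have upper : eta (x + t) - eta x ≤ eta t := by
    rcases ht.eq_or_lt with h | htpos
    · rw [← h, add_zero, eta_zero]; linarith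
    · rcases hx.eq_or_lt with h | hxpos
      · rw [← h, zero_add, eta_zero]; linarith
      · have hxtpos : 0 < x + t := by linarith
        have h1 : Real.log x ≤ Real.log (x + t) := Real.log_le_log hxpos (by linarith)
        have h2 : Real.log t ≤ Real.log (x + t) := Real.log_le_log htpos (by linarith)
        simp only [eta]
        nlinarith [mul_nonneg hx (sub_nonneg.mpr h1), mul_nonneg ht (sub_nonneg.mpr h2)]
  rw [abs_le]
  constructor <;> linarith

lemma eta_abs_diff {x y : ℝ} (hx0 : 0 ≤ x) (hx1 : x ≤ 1) (hy0 : 0 ≤ y) (hy1 : y ≤ 1) :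
    |eta x - eta y| ≤ eta |x - y| + |x - y| := by
  rcases le_total x y with h | h
  · have h2 := eta_diff_le hx0 (sub_nonneg.mpr h) (by linarith : x + (y - x) ≤ 1)
    rw [show x + (y - x) = y by ring] at h2
    rw [abs_sub_comm, show |x - y| = y - x by rw [abs_of_nonpos (by linarith)]; ring]
    exact h2
  · have h2 := eta_diff_le hy0 (sub_nonneg.mpr h) (by linarith : y + (x - y) ≤ 1)
    rw [show y + (x - y) = x by ring] at h2
    rw [show |x - y| = x - y from abs_of_nonneg (by linarith)]
    exact h2

lemma sum_eta_le {n : ℕ} (t : Fin n → ℝ) (ht : ∀ i, 0 ≤ t i) :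
    ∑ i, eta (t i) ≤ (∑ i, t i) * Real.log n - (∑ i, t i) * Real.log (∑ i, t i) := by
  set T := ∑ i, t i with hT
  have hT0 : 0 ≤ T := Finset.sum_nonneg fun i _ => ht i
  rcases hT0.eq_or_lt with h | hTpos
  · have hall : ∀ i ∈ Finset.univ, t i = 0 :=
      (Finset.sum_eq_zero_iff_of_nonneg (fun i _ => ht i)).mp h.symm
    have h2 : ∑ i, eta (t i) = 0 := Finset.sum_eq_zero fun i hi => by rw [hall i hi, eta_zero]
    rw [h2, ← h]
    simp
  · have hn : 0 < n := by
      rcases Nat.eq_zero_or_pos n with h0 | h0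
      · exfalso; subst h0
        have : T = 0 := by simp [hT]
        linarith
      · exact h0
    have key : ∀ i, eta (t i) ≤ T / n - t i + t i * (Real.log n - Real.log T) := by
      intro i
      rcases (ht i).eq_or_lt with h | hpos
      · rw [← h, eta_zero]
        have : 0 ≤ T / n := by positivity
        simp only [sub_zero, zero_mul, add_zero]; linarith
      · have harg : 0 < T / (n * t i) := by positivity
        have h1 : Real.log (T / (n * t i)) ≤ T / (n * t i) - 1 := Real.log_le_sub_one_of_pos harg
        rw [Real.log_div hTpos.ne' (by positivity), Real.log_mul (by positivity : (n:ℝ) ≠ 0) hpos.ne'] at h1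
        have h2 := mul_le_mul_of_nonneg_left h1 hpos.le
        have h3 : t i * (T / (n * t i) - 1) = T / n - t i := by
          field_simp
        simp only [eta]
        nlinarith
    calc ∑ i, eta (t i) ≤ ∑ i, (T / n - t i + t i * (Real.log n - Real.log T)) :=
          Finset.sum_le_sum fun i _ => key i
      _ = T * Real.log n - T * Real.log T := by
          rw [Finset.sum_add_distrib, Finset.sum_sub_distrib, Finset.sum_const, ← Finset.sum_mul, ← hT]
          simp only [Finset.card_univ, Fintype.card_fin, nsmul_eq_mul]
          have : (n : ℝ) ≠ 0 := by positivity
          field_simp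
          ring


noncomputable def chi (k i : ℕ) : ℝ := if k ≤ i then 1 else 0

lemma chi_nonneg (k i : ℕ) : 0 ≤ chi k i := by unfold chi; split <;> norm_num
lemma chi_le_one (k i : ℕ) : chi k i ≤ 1 := by unfold chi; split <;> norm_num

lemma chi_mul_chi (k l i : ℕ) : chi k i * chi l i = chi (max k l) i := by
  unfold chi
  by_cases h1 : k ≤ i <;> by_cases h2 : l ≤ i <;>
    simp [h1, h2, max_le_iff] <;> omega

lemma sum_chi (n k : ℕ) : ∑ i ∈ range n, chi k i = (n - k : ℕ) := by
  unfold chi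
  rw [← Finset.sum_filter]
  have h : (range n).filter (fun i => k ≤ i) = Finset.Ico k n := by
    ext x; simp [Finset.mem_filter, Finset.mem_range, Finset.mem_Ico]; omega
  rw [h]
  simp [Nat.card_Ico]

lemma layer (a : ℕ → ℝ) (n i : ℕ) (hi : i < n) :
    a i = ∑ k ∈ range n, chi k i * (if k = 0 then a 0 else a k - a (k - 1)) := by
  have h1 : ∀ k, chi k i * (if k = 0 then a 0 else a k - a (k-1)) =
      if k ≤ i then (if k = 0 then a 0 else a k - a (k-1)) else 0 := by
    intro k; unfold chi; split <;> simp
  simp_rw [h1]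
  rw [← Finset.sum_filter]
  have h2 : (range n).filter (fun k => k ≤ i) = range (i+1) := by
    ext x; simp [Finset.mem_filter, Finset.mem_range]; omega
  rw [h2, Finset.sum_range_succ']
  have h3 : ∀ k ∈ range i, (if k + 1 = 0 then a 0 else a (k+1) - a (k+1-1)) = a (k+1) - a k := by
    intro k _; simp
  rw [Finset.sum_congr rfl h3, Finset.sum_range_sub]
  simp

/-- Rearrangement bound for doubly stochastic weights against increasing nonneg sequences. -/
lemma rearrange_nat (n : ℕ) (S a b : ℕ → ℕ → ℝ → ℝ) : True := trivial

lemma rearrange (n : ℕ) (S : ℕ → ℕ → ℝ) (a b : ℕ → ℝ)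
    (hS0 : ∀ i j, 0 ≤ S i j)
    (hrow : ∀ i, i < n → ∑ j ∈ range n, S i j = 1)
    (hcol : ∀ j, j < n → ∑ i ∈ range n, S i j = 1)
    (ha : ∀ ⦃i j⦄, i ≤ j → j < n → a i ≤ a j)
    (hb : ∀ ⦃i j⦄, i ≤ j → j < n → b i ≤ b j)
    (ha0 : 0 ≤ a 0) (hb0 : 0 ≤ b 0) :
    ∑ i ∈ range n, ∑ j ∈ range n, S i j * (a i * b j) ≤ ∑ i ∈ range n, a i * b i := by
  rcases Nat.eq_zero_or_pos n with h0 | hn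
  · subst h0; simp
  set g : ℕ → ℝ := fun k => if k = 0 then a 0 else a k - a (k-1) with hg
  set h : ℕ → ℝ := fun k => if k = 0 then b 0 else b k - b (k-1) with hh
  have hgnn : ∀ k, k < n → 0 ≤ g k := by
    intro k hk; simp only [hg]
    split
    · exact ha0
    · next hne => exact sub_nonneg.mpr (ha (Nat.sub_le k 1) hk)
  have hhnn : ∀ k, k < n → 0 ≤ h k := by
    intro k hk; simp only [hh]
    split
    · exact hb0
    · next hne => exact sub_nonneg.mpr (hb (Nat.sub_le k 1) hk)
  have swap2 : ∀ (F : ℕ → ℕ → ℝ), ∑ i ∈ range n, ∑ j ∈ range n, F i j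
      = ∑ j ∈ range n, ∑ i ∈ range n, F i j := fun F => Finset.sum_comm
  have swap3 : ∀ (F : ℕ → ℕ → ℕ → ℝ), ∑ i ∈ range n, ∑ k ∈ range n, ∑ l ∈ range n, F i k l
      = ∑ k ∈ range n, ∑ l ∈ range n, ∑ i ∈ range n, F i k l := by
    intro F
    rw [swap2]
    exact Finset.sum_congr rfl fun k _ => Finset.sum_comm
  -- Φ and Ψ
  set Φ : ℕ → ℕ → ℝ := fun k l => ∑ i ∈ range n, ∑ j ∈ range n, S i j * (chi k i * chi l j) with hΦ
  set Ψ : ℕ → ℕ → ℝ := fun k l => ∑ i ∈ range n, chi k i * chi l i with hΨ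
  -- LHS expansion
  have expandL : ∑ i ∈ range n, ∑ j ∈ range n, S i j * (a i * b j)
      = ∑ k ∈ range n, ∑ l ∈ range n, (g k * h l) * Φ k l := by
    have e1 : ∀ i ∈ range n, ∀ j ∈ range n, S i j * (a i * b j)
        = ∑ k ∈ range n, ∑ l ∈ range n, (g k * h l) * (S i j * (chi k i * chi l j)) := by
      intro i hi j hj
      rw [layer a n i (mem_range.mp hi), layer b n j (mem_range.mp hj)]
      rw [Finset.sum_mul_sum, Finset.mul_sum]
      refine Finset.sum_congr rfl fun k _ => ?_
      rw [Finset.mul_sum]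
      refine Finset.sum_congr rfl fun l _ => ?_
      simp only [hg, hh]
      ring
    calc ∑ i ∈ range n, ∑ j ∈ range n, S i j * (a i * b j)
        = ∑ i ∈ range n, ∑ j ∈ range n, ∑ k ∈ range n, ∑ l ∈ range n,
            (g k * h l) * (S i j * (chi k i * chi l j)) :=
          Finset.sum_congr rfl fun i hi => Finset.sum_congr rfl fun j hj => e1 i hi j hj
      _ = ∑ i ∈ range n, ∑ k ∈ range n, ∑ l ∈ range n, ∑ j ∈ range n,
            (g k * h l) * (S i j * (chi k i * chi l j)) :=
          Finset.sum_congr rfl fun i _ => swap3 _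
      _ = ∑ k ∈ range n, ∑ i ∈ range n, ∑ l ∈ range n, ∑ j ∈ range n,
            (g k * h l) * (S i j * (chi k i * chi l j)) := swap2 _
      _ = ∑ k ∈ range n, ∑ l ∈ range n, ∑ i ∈ range n, ∑ j ∈ range n,
            (g k * h l) * (S i j * (chi k i * chi l j)) :=
          Finset.sum_congr rfl fun k _ => swap2 _
      _ = ∑ k ∈ range n, ∑ l ∈ range n, (g k * h l) * Φ k l := by
          refine Finset.sum_congr rfl fun k _ => Finset.sum_congr rfl fun l _ => ?_
          simp only [hΦ]
          rw [Finset.mul_sum]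
          refine Finset.sum_congr rfl fun i _ => ?_
          rw [Finset.mul_sum]
  have expandR : ∑ i ∈ range n, a i * b i
      = ∑ k ∈ range n, ∑ l ∈ range n, (g k * h l) * Ψ k l := by
    have e1 : ∀ i ∈ range n, a i * b i
        = ∑ k ∈ range n, ∑ l ∈ range n, (g k * h l) * (chi k i * chi l i) := by
      intro i hi
      rw [layer a n i (mem_range.mp hi), layer b n i (mem_range.mp hi)]
      rw [Finset.sum_mul_sum]
      refine Finset.sum_congr rfl fun k _ => Finset.sum_congr rfl fun l _ => ?_
      simp only [hg, hh]
      ring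
    calc ∑ i ∈ range n, a i * b i
        = ∑ i ∈ range n, ∑ k ∈ range n, ∑ l ∈ range n, (g k * h l) * (chi k i * chi l i) :=
          Finset.sum_congr rfl e1
      _ = ∑ k ∈ range n, ∑ l ∈ range n, ∑ i ∈ range n, (g k * h l) * (chi k i * chi l i) :=
          swap3 _
      _ = ∑ k ∈ range n, ∑ l ∈ range n, (g k * h l) * Ψ k l := by
          refine Finset.sum_congr rfl fun k _ => Finset.sum_congr rfl fun l _ => ?_
          simp only [hΨ]
          rw [Finset.mul_sum]
  -- compare Φ and Ψ
  have hΨval : ∀ k l, Ψ k l = ((n - max k l : ℕ) : ℝ) := by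
    intro k l
    simp only [hΨ]
    simp_rw [chi_mul_chi]
    exact sum_chi n (max k l)
  have hΦle : ∀ k l, k < n → l < n → Φ k l ≤ Ψ k l := by
    intro k l hk hl
    rw [hΨval k l]
    have bnd1 : Φ k l ≤ ((n - k : ℕ) : ℝ) := by
      have inner : ∀ i ∈ range n, ∑ j ∈ range n, S i j * (chi k i * chi l j) ≤ chi k i := by
        intro i hi
        have : ∀ j ∈ range n, S i j * (chi k i * chi l j) ≤ S i j * chi k i := by
          intro j hj
          apply mul_le_mul_of_nonneg_left _ (hS0 i j)
          calc chi k i * chi l j ≤ chi k i * 1 :=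
            mul_le_mul_of_nonneg_left (chi_le_one l j) (chi_nonneg k i)
          _ = chi k i := mul_one _
        calc ∑ j ∈ range n, S i j * (chi k i * chi l j) ≤ ∑ j ∈ range n, S i j * chi k i :=
              Finset.sum_le_sum this
          _ = (∑ j ∈ range n, S i j) * chi k i := by rw [← Finset.sum_mul]
          _ = chi k i := by rw [hrow i (mem_range.mp hi), one_mul]
      calc Φ k l ≤ ∑ i ∈ range n, chi k i := Finset.sum_le_sum inner
        _ = ((n - k : ℕ) : ℝ) := sum_chi n k
    have bnd2 : Φ k l ≤ ((n - l : ℕ) : ℝ) := by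
      have swap : Φ k l = ∑ j ∈ range n, ∑ i ∈ range n, S i j * (chi k i * chi l j) := by
        simp only [hΦ]; exact Finset.sum_comm
      rw [swap]
      have inner : ∀ j ∈ range n, ∑ i ∈ range n, S i j * (chi k i * chi l j) ≤ chi l j := by
        intro j hj
        have : ∀ i ∈ range n, S i j * (chi k i * chi l j) ≤ S i j * chi l j := by
          intro i hi
          apply mul_le_mul_of_nonneg_left _ (hS0 i j)
          calc chi k i * chi l j ≤ 1 * chi l j :=
            mul_le_mul_of_nonneg_right (chi_le_one k i) (chi_nonneg l j)
          _ = chi l j := one_mul _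
        calc ∑ i ∈ range n, S i j * (chi k i * chi l j) ≤ ∑ i ∈ range n, S i j * chi l j :=
              Finset.sum_le_sum this
          _ = (∑ i ∈ range n, S i j) * chi l j := by rw [← Finset.sum_mul]
          _ = chi l j := by rw [hcol j (mem_range.mp hj), one_mul]
      calc ∑ j ∈ range n, ∑ i ∈ range n, S i j * (chi k i * chi l j)
          ≤ ∑ j ∈ range n, chi l j := Finset.sum_le_sum inner
        _ = ((n - l : ℕ) : ℝ) := sum_chi n l
    have : (n - max k l : ℕ) = min (n - k) (n - l) := by omega
    rw [this]
    rw [Nat.cast_min]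
    exact le_min bnd1 bnd2
  rw [expandL, expandR]
  apply Finset.sum_le_sum
  intro k hk
  apply Finset.sum_le_sum
  intro l hl
  exact mul_le_mul_of_nonneg_left (hΦle k l (mem_range.mp hk) (mem_range.mp hl))
    (mul_nonneg (hgnn k (mem_range.mp hk)) (hhnn l (mem_range.mp hl)))

variable {d : ℕ}

namespace EntropyHolderAux

/-- transition matrix between two eigenbases -/
noncomputable def wMat {A B : Matrix (Fin d) (Fin d) ℂ} (hA : A.IsHermitian) (hB : B.IsHermitian) :
    Matrix (Fin d) (Fin d) ℂ :=
  star (hA.eigenvectorUnitary : Matrix (Fin d) (Fin d) ℂ) *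
    (hB.eigenvectorUnitary : Matrix (Fin d) (Fin d) ℂ)

lemma wMat_mul_star {A B : Matrix (Fin d) (Fin d) ℂ} (hA : A.IsHermitian) (hB : B.IsHermitian) :
    wMat hA hB * star (wMat hA hB) = 1 := by
  unfold wMat
  rw [StarMul.star_mul, star_star]
  have hU : (hA.eigenvectorUnitary : Matrix (Fin d) (Fin d) ℂ) *
      star (hA.eigenvectorUnitary : Matrix (Fin d) (Fin d) ℂ) = 1 :=
    (Unitary.mem_iff.mp hA.eigenvectorUnitary.2).2
  have hV : (hB.eigenvectorUnitary : Matrix (Fin d) (Fin d) ℂ) *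
      star (hB.eigenvectorUnitary : Matrix (Fin d) (Fin d) ℂ) = 1 :=
    (Unitary.mem_iff.mp hB.eigenvectorUnitary.2).2
  calc star (hA.eigenvectorUnitary : Matrix (Fin d) (Fin d) ℂ) *
        (hB.eigenvectorUnitary : Matrix (Fin d) (Fin d) ℂ) *
        (star (hB.eigenvectorUnitary : Matrix (Fin d) (Fin d) ℂ) *
          (hA.eigenvectorUnitary : Matrix (Fin d) (Fin d) ℂ))
      = star (hA.eigenvectorUnitary : Matrix (Fin d) (Fin d) ℂ) *
        (((hB.eigenvectorUnitary : Matrix (Fin d) (Fin d) ℂ) *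
          star (hB.eigenvectorUnitary : Matrix (Fin d) (Fin d) ℂ)) *
          (hA.eigenvectorUnitary : Matrix (Fin d) (Fin d) ℂ)) := by
        simp only [mul_assoc]
    _ = 1 := by
        rw [hV, one_mul]
        exact (Unitary.mem_iff.mp hA.eigenvectorUnitary.2).1

lemma star_wMat_mul {A B : Matrix (Fin d) (Fin d) ℂ} (hA : A.IsHermitian) (hB : B.IsHermitian) :
    star (wMat hA hB) * wMat hA hB = 1 := by
  unfold wMat
  rw [StarMul.star_mul, star_star]
  calc star (hB.eigenvectorUnitary : Matrix (Fin d) (Fin d) ℂ) *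
        (hA.eigenvectorUnitary : Matrix (Fin d) (Fin d) ℂ) *
        (star (hA.eigenvectorUnitary : Matrix (Fin d) (Fin d) ℂ) *
          (hB.eigenvectorUnitary : Matrix (Fin d) (Fin d) ℂ))
      = star (hB.eigenvectorUnitary : Matrix (Fin d) (Fin d) ℂ) *
        (((hA.eigenvectorUnitary : Matrix (Fin d) (Fin d) ℂ) *
          star (hA.eigenvectorUnitary : Matrix (Fin d) (Fin d) ℂ)) *
          (hB.eigenvectorUnitary : Matrix (Fin d) (Fin d) ℂ)) := by
        simp only [mul_assoc]
    _ = 1 := by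
        rw [(Unitary.mem_iff.mp hA.eigenvectorUnitary.2).2, one_mul]
        exact (Unitary.mem_iff.mp hB.eigenvectorUnitary.2).1

lemma wMat_row_sum {A B : Matrix (Fin d) (Fin d) ℂ} (hA : A.IsHermitian) (hB : B.IsHermitian)
    (k : Fin d) : ∑ l, Complex.normSq (wMat hA hB k l) = 1 := by
  have h := wMat_mul_star hA hB
  have h2 : (wMat hA hB * star (wMat hA hB)) k k = 1 := by rw [h, Matrix.one_apply_eq]
  rw [Matrix.mul_apply] at h2
  have h3 : ∀ l, wMat hA hB k l * star (wMat hA hB) l k = (Complex.normSq (wMat hA hB k l) : ℂ) := by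
    intro l
    rw [Matrix.star_apply, Complex.star_def, Complex.mul_conj]
  rw [Finset.sum_congr rfl fun l _ => h3 l] at h2
  exact_mod_cast h2

lemma wMat_col_sum {A B : Matrix (Fin d) (Fin d) ℂ} (hA : A.IsHermitian) (hB : B.IsHermitian)
    (l : Fin d) : ∑ k, Complex.normSq (wMat hA hB k l) = 1 := by
  have h := star_wMat_mul hA hB
  have h2 : (star (wMat hA hB) * wMat hA hB) l l = 1 := by rw [h, Matrix.one_apply_eq]
  rw [Matrix.mul_apply] at h2
  have h3 : ∀ k, star (wMat hA hB) l k * wMat hA hB k l = (Complex.normSq (wMat hA hB k l) : ℂ) := by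
    intro k
    rw [Matrix.star_apply, Complex.star_def, mul_comm, Complex.mul_conj]
  rw [Finset.sum_congr rfl fun k _ => h3 k] at h2
  exact_mod_cast h2

lemma trace_mul_eq {A B : Matrix (Fin d) (Fin d) ℂ} (hA : A.IsHermitian) (hB : B.IsHermitian) :
    (A * B).trace = ((∑ k, ∑ l, hA.eigenvalues k * hB.eigenvalues l *
      Complex.normSq (wMat hA hB k l) : ℝ) : ℂ) := by
  set U := (hA.eigenvectorUnitary : Matrix (Fin d) (Fin d) ℂ)
  set V := (hB.eigenvectorUnitary : Matrix (Fin d) (Fin d) ℂ)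
  set Da := diagonal ((RCLike.ofReal : ℝ → ℂ) ∘ hA.eigenvalues) with hDa
  set Db := diagonal ((RCLike.ofReal : ℝ → ℂ) ∘ hB.eigenvalues) with hDb
  have hAB : A * B = (U * Da) * ((star U * V) * Db * star V) := by
    conv_lhs => rw [hA.spectral_theorem, Unitary.conjStarAlgAut_apply, hB.spectral_theorem,
      Unitary.conjStarAlgAut_apply]
    simp only [mul_assoc]
    rfl
  have hW : star V * U = star (wMat hA hB) := by
    unfold wMat; rw [StarMul.star_mul, star_star]
  have step : (A * B).trace = (wMat hA hB * Db * star (wMat hA hB) * Da).trace := by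
    rw [hAB, Matrix.trace_mul_comm]
    congr 1
    unfold wMat
    rw [StarMul.star_mul, star_star]
    simp only [mul_assoc]
    rfl
  rw [step]
  have entry : ∀ k l : Fin d,
      wMat hA hB k l * ((RCLike.ofReal : ℝ → ℂ) ∘ hB.eigenvalues) l *
        ((starRingEnd ℂ) (wMat hA hB k l)) * ((RCLike.ofReal : ℝ → ℂ) ∘ hA.eigenvalues) k
      = ((hA.eigenvalues k * hB.eigenvalues l * Complex.normSq (wMat hA hB k l) : ℝ) : ℂ) := by
    intro k l
    have : wMat hA hB k l * ((RCLike.ofReal : ℝ → ℂ) ∘ hB.eigenvalues) l *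
        ((starRingEnd ℂ) (wMat hA hB k l)) * ((RCLike.ofReal : ℝ → ℂ) ∘ hA.eigenvalues) k
        = ((RCLike.ofReal : ℝ → ℂ) ∘ hB.eigenvalues) l * ((RCLike.ofReal : ℝ → ℂ) ∘ hA.eigenvalues) k *
          (wMat hA hB k l * (starRingEnd ℂ) (wMat hA hB k l)) := by ring
    rw [this, Complex.mul_conj]
    simp only [Function.comp_apply, RCLike.ofReal_alg, Complex.coe_algebraMap]
    push_cast
    ring
  have lhs_eq : (wMat hA hB * Db * star (wMat hA hB) * Da).trace
      = ∑ k, ∑ l, ((hA.eigenvalues k * hB.eigenvalues l *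
          Complex.normSq (wMat hA hB k l) : ℝ) : ℂ) := by
    rw [Matrix.trace]
    refine Finset.sum_congr rfl fun k _ => ?_
    rw [Matrix.diag_apply, hDa, Matrix.mul_diagonal, hDb, Matrix.mul_apply]
    rw [Finset.sum_mul]
    refine Finset.sum_congr rfl fun l _ => ?_
    rw [Matrix.mul_diagonal, Matrix.star_apply, Complex.star_def]
    exact entry k l
  rw [lhs_eq]
  push_cast
  rfl

lemma trace_eq_sum_eigs {A : Matrix (Fin d) (Fin d) ℂ} (hA : A.IsHermitian) :
    A.trace = ((∑ i, hA.eigenvalues i : ℝ) : ℂ) := by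
  conv_lhs => rw [hA.spectral_theorem, Unitary.conjStarAlgAut_apply]
  rw [Matrix.trace_mul_cycle, (Unitary.mem_iff.mp hA.eigenvectorUnitary.2).1, one_mul,
    Matrix.trace_diagonal]
  push_cast
  rfl

lemma wMat_self {A : Matrix (Fin d) (Fin d) ℂ} (hA : A.IsHermitian) : wMat hA hA = 1 :=
  (Unitary.mem_iff.mp hA.eigenvectorUnitary.2).1

lemma trace_sq {A : Matrix (Fin d) (Fin d) ℂ} (hA : A.IsHermitian) :
    (A * A).trace = ((∑ k, hA.eigenvalues k ^ 2 : ℝ) : ℂ) := by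
  rw [trace_mul_eq hA hA]
  congr 1
  refine Finset.sum_congr rfl fun k _ => ?_
  rw [Finset.sum_eq_single k]
  · rw [wMat_self, Matrix.one_apply_eq]
    simp [sq]
  · intro l _ hlk
    rw [wMat_self, Matrix.one_apply_ne (Ne.symm hlk)]
    simp
  · intro h
    exact absurd (Finset.mem_univ k) h

end EntropyHolderAux


set_option maxHeartbeats 2000000

/-- For `d ≥ 5`, the von Neumann entropy is Hölder-continuous with
exponent `1/2` w.r.t. the Hilbert–Schmidt distance:
`|S(ρ) − S(σ)| ≤ d^{1/4} (π ln d / ln 2) D_HS(ρ,σ)^{1/2}`. -/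
theorem entropy_holder_hsDist {d : ℕ} (hd : 5 ≤ d)
    (ρ σ : Matrix (Fin d) (Fin d) ℂ)
    (hρ : ρ.PosSemidef) (hρ1 : ρ.trace = 1)
    (hσ : σ.PosSemidef) (hσ1 : σ.trace = 1) :
    |vnEntropy ρ - vnEntropy σ| ≤
      (d : ℝ) ^ ((1 : ℝ) / 4) * (Real.pi * Real.log d / Real.log 2) *
        Real.sqrt (hsDist ρ σ) := by
  classical
  have hdpos : 0 < d := by omega
  set π₁ := Tuple.sort hρ.1.eigenvalues with hπ₁
  set τ₁ := Tuple.sort hσ.1.eigenvalues with hτ₁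
  set ℓ : Fin d → ℝ := hρ.1.eigenvalues ∘ π₁ with hℓ
  set m : Fin d → ℝ := hσ.1.eigenvalues ∘ τ₁ with hm
  have hℓdef : eigsInc ρ = ℓ := by
    unfold eigsInc; rw [dif_pos hρ.1]
  have hmdef : eigsInc σ = m := by
    unfold eigsInc; rw [dif_pos hσ.1]
  have hℓmono : Monotone ℓ := Tuple.monotone_sort _
  have hmmono : Monotone m := Tuple.monotone_sort _
  have hℓnn : ∀ i, 0 ≤ ℓ i := fun i => hρ.eigenvalues_nonneg _
  have hmnn : ∀ i, 0 ≤ m i := fun i => hσ.eigenvalues_nonneg _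
  have hℓsum : ∑ i, ℓ i = 1 := by
    have h1 : ∑ i, ℓ i = ∑ i, hρ.1.eigenvalues i := by
      rw [hℓ]; exact Fintype.sum_equiv π₁ _ _ (fun i => rfl)
    have h2 := EntropyHolderAux.trace_eq_sum_eigs hρ.1
    rw [hρ1] at h2
    have h3 : (∑ i, hρ.1.eigenvalues i : ℝ) = 1 := by exact_mod_cast h2.symm
    rw [h1, h3]
  have hmsum : ∑ i, m i = 1 := by
    have h1 : ∑ i, m i = ∑ i, hσ.1.eigenvalues i := by
      rw [hm]; exact Fintype.sum_equiv τ₁ _ _ (fun i => rfl)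
    have h2 := EntropyHolderAux.trace_eq_sum_eigs hσ.1
    rw [hσ1] at h2
    have h3 : (∑ i, hσ.1.eigenvalues i : ℝ) = 1 := by exact_mod_cast h2.symm
    rw [h1, h3]
  have hℓle1 : ∀ i, ℓ i ≤ 1 := by
    intro i
    rw [← hℓsum]
    exact Finset.single_le_sum (fun j _ => hℓnn j) (Finset.mem_univ i)
  have hmle1 : ∀ i, m i ≤ 1 := by
    intro i
    rw [← hmsum]
    exact Finset.single_le_sum (fun j _ => hmnn j) (Finset.mem_univ i)
  -- entropies as sums of eta
  have hSρ : vnEntropy ρ = ∑ i, eta (ℓ i) := by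
    unfold vnEntropy
    rw [hℓdef, ← Finset.sum_neg_distrib]
    rfl
  have hSσ : vnEntropy σ = ∑ i, eta (m i) := by
    unfold vnEntropy
    rw [hmdef, ← Finset.sum_neg_distrib]
    rfl
  set L := Real.log d with hL
  have hLlb : 2 * Real.log 2 ≤ L := by
    have h4 : Real.log 4 ≤ L := Real.log_le_log (by norm_num) (by exact_mod_cast by omega : (4:ℝ) ≤ d)
    have : Real.log 4 = 2 * Real.log 2 := by
      rw [show (4:ℝ) = 2^2 by norm_num, Real.log_pow]; push_cast; ring
    linarith
  have hlog2 : (0.6931471803 : ℝ) < Real.log 2 := Real.log_two_gt_d9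
  have hlog2' : Real.log 2 < 0.6931471808 := Real.log_two_lt_d9
  have hLc : (1.38 : ℝ) ≤ L := by linarith
  have hL0 : 0 < L := by linarith
  -- entropy bounds
  have entropy_le : ∀ (f : Fin d → ℝ), (∀ i, 0 ≤ f i) → ∑ i, f i = 1 →
      ∑ i, eta (f i) ≤ L := by
    intro f hnn hsum
    have := sum_eta_le f hnn
    rw [hsum] at this
    simpa using this
  have entropy_nn : ∀ (f : Fin d → ℝ), (∀ i, 0 ≤ f i) → (∀ i, f i ≤ 1) →
      0 ≤ ∑ i, eta (f i) := by
    intro f hnn hle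
    exact Finset.sum_nonneg fun i _ => eta_nonneg (hnn i) (hle i)
  -- the rearrangement bound on tr(ρσ)
  have key : ((ρ * σ).trace).re ≤ ∑ i, ℓ i * m i := by
    set W := EntropyHolderAux.wMat hρ.1 hσ.1 with hW
    have htr := EntropyHolderAux.trace_mul_eq hρ.1 hσ.1
    have hPre : ((ρ * σ).trace).re
        = ∑ k, ∑ l, hρ.1.eigenvalues k * hσ.1.eigenvalues l * Complex.normSq (W k l) := by
      rw [htr, Complex.ofReal_re]
    have hre : ((ρ * σ).trace).re
        = ∑ k, ∑ l, ℓ k * m l * Complex.normSq (W (π₁ k) (τ₁ l)) := by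
      rw [hPre]
      rw [← Equiv.sum_comp π₁
        (fun k => ∑ l, hρ.1.eigenvalues k * hσ.1.eigenvalues l * Complex.normSq (W k l))]
      refine Finset.sum_congr rfl fun k _ => ?_
      rw [← Equiv.sum_comp τ₁
        (fun l => hρ.1.eigenvalues (π₁ k) * hσ.1.eigenvalues l * Complex.normSq (W (π₁ k) l))]
      rfl
    set an : ℕ → ℝ := fun i => if h : i < d then ℓ ⟨i, h⟩ else 0 with han
    set bn : ℕ → ℝ := fun i => if h : i < d then m ⟨i, h⟩ else 0 with hbn
    set Sn : ℕ → ℕ → ℝ := fun i j =>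
      if h : i < d ∧ j < d then Complex.normSq (W (π₁ ⟨i, h.1⟩) (τ₁ ⟨j, h.2⟩)) else 0 with hSn
    have conv1 : ∀ F : Fin d → ℝ,
        ∑ i ∈ Finset.range d, (if h : i < d then F ⟨i, h⟩ else 0) = ∑ i : Fin d, F i := by
      intro F
      rw [← Fin.sum_univ_eq_sum_range (fun i => if h : i < d then F ⟨i, h⟩ else 0) d]
      exact Finset.sum_congr rfl fun i _ => by simp
    have hS0 : ∀ i j, 0 ≤ Sn i j := by
      intro i j
      simp only [hSn]
      split
      · exact Complex.normSq_nonneg _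
      · exact le_refl 0
    have hrowS : ∀ i, i < d → ∑ j ∈ Finset.range d, Sn i j = 1 := by
      intro i hi
      have h1 : ∑ j ∈ Finset.range d, Sn i j
          = ∑ j : Fin d, Complex.normSq (W (π₁ ⟨i, hi⟩) (τ₁ j)) := by
        rw [← Fin.sum_univ_eq_sum_range (fun j => Sn i j) d]
        refine Finset.sum_congr rfl fun j _ => ?_
        simp [hSn, hi]
      rw [h1, Equiv.sum_comp τ₁ (fun j => Complex.normSq (W (π₁ ⟨i, hi⟩) j))]
      exact EntropyHolderAux.wMat_row_sum hρ.1 hσ.1 _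
    have hcolS : ∀ j, j < d → ∑ i ∈ Finset.range d, Sn i j = 1 := by
      intro j hj
      have h1 : ∑ i ∈ Finset.range d, Sn i j
          = ∑ i : Fin d, Complex.normSq (W (π₁ i) (τ₁ ⟨j, hj⟩)) := by
        rw [← Fin.sum_univ_eq_sum_range (fun i => Sn i j) d]
        refine Finset.sum_congr rfl fun i _ => ?_
        simp [hSn, hj]
      rw [h1, Equiv.sum_comp π₁ (fun i => Complex.normSq (W i (τ₁ ⟨j, hj⟩)))]
      exact EntropyHolderAux.wMat_col_sum hρ.1 hσ.1 _
    have haa : ∀ ⦃i j : ℕ⦄, i ≤ j → j < d → an i ≤ an j := by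
      intro i j hij hjd
      have hid : i < d := lt_of_le_of_lt hij hjd
      simp only [han, dif_pos hid, dif_pos hjd]
      exact hℓmono (by exact_mod_cast hij : (⟨i, hid⟩ : Fin d) ≤ ⟨j, hjd⟩)
    have hbb : ∀ ⦃i j : ℕ⦄, i ≤ j → j < d → bn i ≤ bn j := by
      intro i j hij hjd
      have hid : i < d := lt_of_le_of_lt hij hjd
      simp only [hbn, dif_pos hid, dif_pos hjd]
      exact hmmono (by exact_mod_cast hij : (⟨i, hid⟩ : Fin d) ≤ ⟨j, hjd⟩)
    have ha0 : 0 ≤ an 0 := by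
      simp only [han, dif_pos hdpos]
      exact hℓnn _
    have hb0 : 0 ≤ bn 0 := by
      simp only [hbn, dif_pos hdpos]
      exact hmnn _
    have main := rearrange d Sn an bn hS0 hrowS hcolS haa hbb ha0 hb0
    have hLHS : ∑ i ∈ Finset.range d, ∑ j ∈ Finset.range d, Sn i j * (an i * bn j)
        = ∑ k : Fin d, ∑ l : Fin d, ℓ k * m l * Complex.normSq (W (π₁ k) (τ₁ l)) := by
      rw [← Fin.sum_univ_eq_sum_range (fun i => ∑ j ∈ Finset.range d, Sn i j * (an i * bn j)) d]
      refine Finset.sum_congr rfl fun k _ => ?_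
      rw [← Fin.sum_univ_eq_sum_range (fun j => Sn (↑k) j * (an ↑k * bn j)) d]
      refine Finset.sum_congr rfl fun l _ => ?_
      have hs : Sn (↑k) (↑l) = Complex.normSq (W (π₁ k) (τ₁ l)) := by simp [hSn]
      have ha' : an ↑k = ℓ k := by simp [han]
      have hb' : bn ↑l = m l := by simp [hbn]
      rw [hs, ha', hb']
      ring
    have hRHS : ∑ i ∈ Finset.range d, an i * bn i = ∑ i : Fin d, ℓ i * m i := by
      rw [← Fin.sum_univ_eq_sum_range (fun i => an i * bn i) d]
      refine Finset.sum_congr rfl fun i _ => ?_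
      simp [han, hbn, i.isLt]
    rw [hre, ← hLHS, ← hRHS]
    exact main
  -- Hilbert-Schmidt distance
  set D := hsDist ρ σ with hD
  have hDnn : 0 ≤ D := Real.sqrt_nonneg _
  set P := ((ρ * σ).trace).re with hP
  have hE : (((ρ - σ)ᴴ * (ρ - σ)).trace).re = ∑ i, ℓ i ^ 2 + ∑ i, m i ^ 2 - 2 * P := by
    have hΔh : ((ρ - σ)ᴴ) = ρ - σ := hρ.1.sub hσ.1
    rw [hΔh]
    have hexp : ((ρ - σ) * (ρ - σ)).trace
        = (ρ*ρ).trace - (ρ*σ).trace - ((σ*ρ).trace - (σ*σ).trace) := by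
      rw [sub_mul, mul_sub, mul_sub, Matrix.trace_sub, Matrix.trace_sub, Matrix.trace_sub]
    rw [hexp, Matrix.trace_mul_comm σ ρ, EntropyHolderAux.trace_sq hρ.1,
      EntropyHolderAux.trace_sq hσ.1]
    have e1 : ∑ i, ℓ i ^ 2 = ∑ i, hρ.1.eigenvalues i ^ 2 := Fintype.sum_equiv π₁ _ _ fun i => rfl
    have e2 : ∑ i, m i ^ 2 = ∑ i, hσ.1.eigenvalues i ^ 2 := Fintype.sum_equiv τ₁ _ _ fun i => rfl
    simp only [Complex.sub_re, Complex.ofReal_re]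
    rw [← e1, ← e2, hP]
    ring
  have hsq : ∑ i, (ℓ i - m i)^2 ≤ D ^ 2 := by
    have h0 : ∑ i, (ℓ i - m i)^2 = ∑ i, ℓ i ^2 + ∑ i, m i ^2 - 2 * ∑ i, ℓ i * m i := by
      rw [← Finset.sum_add_distrib, Finset.mul_sum, ← Finset.sum_sub_distrib]
      exact Finset.sum_congr rfl fun i _ => by ring
    have hEnn : 0 ≤ (((ρ - σ)ᴴ * (ρ - σ)).trace).re := by
      rw [hE]
      have : ∑ i, (ℓ i - m i)^2 ≤ ∑ i, ℓ i ^ 2 + ∑ i, m i ^ 2 - 2 * P := by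
        rw [h0]; linarith [key]
      have h2 : (0:ℝ) ≤ ∑ i, (ℓ i - m i)^2 := Finset.sum_nonneg fun i _ => sq_nonneg _
      linarith
    have hD2 : D ^ 2 = (((ρ - σ)ᴴ * (ρ - σ)).trace).re := Real.sq_sqrt hEnn
    rw [hD2, hE, h0]
    linarith [key]
  set t : Fin d → ℝ := fun i => |ℓ i - m i| with ht
  have htnn : ∀ i, 0 ≤ t i := fun i => abs_nonneg _
  set T := ∑ i, t i with hT
  have hTnn : 0 ≤ T := Finset.sum_nonneg fun i _ => htnn i
  have hTle : T ≤ Real.sqrt d * D := by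
    have h1 : T^2 ≤ (d : ℝ) * ∑ i, t i ^2 := by
      have := sq_sum_le_card_mul_sum_sq (s := (Finset.univ : Finset (Fin d))) (f := t)
      simpa [Finset.card_univ] using this
    have h2 : ∑ i, t i ^ 2 = ∑ i, (ℓ i - m i)^2 :=
      Finset.sum_congr rfl fun i _ => sq_abs _
    have h3 : T^2 ≤ (Real.sqrt d * D)^2 := by
      rw [mul_pow, Real.sq_sqrt (by positivity : (0:ℝ) ≤ (d:ℝ))]
      calc T^2 ≤ (d:ℝ) * ∑ i, t i ^2 := h1
        _ = (d:ℝ) * ∑ i, (ℓ i - m i)^2 := by rw [h2]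
        _ ≤ (d:ℝ) * D^2 := by
            apply mul_le_mul_of_nonneg_left hsq (by positivity)
    calc T = Real.sqrt (T^2) := (Real.sqrt_sq hTnn).symm
      _ ≤ Real.sqrt ((Real.sqrt d * D)^2) := Real.sqrt_le_sqrt h3
      _ = Real.sqrt d * D := Real.sqrt_sq (by positivity)
  -- difference of entropies
  have hdiff : |vnEntropy ρ - vnEntropy σ| ≤ T * L - T * Real.log T + T := by
    rw [hSρ, hSσ, ← Finset.sum_sub_distrib]
    calc |∑ i, (eta (ℓ i) - eta (m i))| ≤ ∑ i, |eta (ℓ i) - eta (m i)| :=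
          Finset.abs_sum_le_sum_abs _ _
      _ ≤ ∑ i, (eta (t i) + t i) := by
          refine Finset.sum_le_sum fun i _ => ?_
          exact eta_abs_diff (hℓnn i) (hℓle1 i) (hmnn i) (hmle1 i)
      _ = (∑ i, eta (t i)) + T := by rw [Finset.sum_add_distrib]
      _ ≤ (T * L - T * Real.log T) + T := by
          have := sum_eta_le t htnn
          rw [← hT] at this
          linarith
  -- the quarter power
  have hq : ((d:ℝ)) ^ ((1:ℝ)/4) = Real.sqrt (Real.sqrt d) := by
    rw [Real.sqrt_eq_rpow, Real.sqrt_eq_rpow, ← Real.rpow_mul (Nat.cast_nonneg d)]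
    norm_num
  set X := ((d:ℝ)) ^ ((1:ℝ)/4) * Real.sqrt D with hX
  have hXnn : 0 ≤ X := by positivity
  have hXsq : X ^ 2 = Real.sqrt d * D := by
    have h1 : (((d:ℝ)) ^ ((1:ℝ)/4))^2 = Real.sqrt d := by
      rw [hq, Real.sq_sqrt (Real.sqrt_nonneg _)]
    rw [hX, mul_pow, h1, Real.sq_sqrt hDnn]
  have hπbound : (4.5 : ℝ) * Real.log 2 ≤ Real.pi := by
    have := Real.pi_gt_d6
    linarith
  have hlog2pos : (0:ℝ) < Real.log 2 := by linarith
  -- case split on T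
  rcases le_or_gt T 1 with hT1 | hT1
  · -- small T
    have hsT : Real.sqrt T ≤ X := by
      have h1 : Real.sqrt T ≤ Real.sqrt (Real.sqrt d * D) := Real.sqrt_le_sqrt hTle
      have h2 : Real.sqrt (Real.sqrt d * D) = X := by
        rw [hX, hq, Real.sqrt_mul (Real.sqrt_nonneg _)]
      linarith
    have hTsqrt : T ≤ Real.sqrt T := by
      have h1 : Real.sqrt T ≤ 1 := by
        rw [show (1:ℝ) = Real.sqrt 1 by simp]
        exact Real.sqrt_le_sqrt hT1
      calc T = Real.sqrt T * Real.sqrt T := (Real.mul_self_sqrt hTnn).symm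
        _ ≤ Real.sqrt T * 1 := mul_le_mul_of_nonneg_left h1 (Real.sqrt_nonneg _)
        _ = Real.sqrt T := mul_one _
    have heta : - (T * Real.log T) ≤ 2 * Real.sqrt T := by
      have := eta_le_two_sqrt hTnn
      simpa [eta] using this
    have hmain : |vnEntropy ρ - vnEntropy σ| ≤ Real.sqrt T * (L + 3) := by
      have h1 : T * L ≤ Real.sqrt T * L := mul_le_mul_of_nonneg_right hTsqrt hL0.le
      calc |vnEntropy ρ - vnEntropy σ| ≤ T * L - T * Real.log T + T := hdiff
        _ ≤ Real.sqrt T * L + 2 * Real.sqrt T + Real.sqrt T := by linarith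
        _ = Real.sqrt T * (L + 3) := by ring
    have hc : L + 3 ≤ Real.pi * L / Real.log 2 := by
      have h1 : (4.5 : ℝ) * L ≤ Real.pi * L / Real.log 2 := by
        rw [le_div_iff₀ hlog2pos]
        nlinarith [hπbound, hL0.le]
      linarith
    calc |vnEntropy ρ - vnEntropy σ| ≤ Real.sqrt T * (L + 3) := hmain
      _ ≤ X * (L + 3) := mul_le_mul_of_nonneg_right hsT (by linarith)
      _ ≤ X * (Real.pi * L / Real.log 2) := mul_le_mul_of_nonneg_left hc hXnn
      _ = ((d:ℝ)) ^ ((1:ℝ)/4) * (Real.pi * L / Real.log 2) * Real.sqrt D := by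
          rw [hX]; ring
  · -- large T
    have hX1 : 1 ≤ X := by
      have h1 : (1:ℝ) ≤ X^2 := by rw [hXsq]; linarith
      by_contra hcon
      push_neg at hcon
      have h2 : X * X < 1 * 1 := mul_lt_mul'' hcon hcon hXnn hXnn
      rw [one_mul] at h2
      rw [sq] at h1
      linarith
    have hbnd : |vnEntropy ρ - vnEntropy σ| ≤ L := by
      have h1 : 0 ≤ ∑ i, eta (ℓ i) := entropy_nn ℓ hℓnn hℓle1
      have h2 : 0 ≤ ∑ i, eta (m i) := entropy_nn m hmnn hmle1
      have h3 : ∑ i, eta (ℓ i) ≤ L := entropy_le ℓ hℓnn hℓsum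
      have h4 : ∑ i, eta (m i) ≤ L := entropy_le m hmnn hmsum
      rw [hSρ, hSσ, abs_le]
      constructor <;> linarith
    have hc : L ≤ X * (Real.pi * L / Real.log 2) := by
      have h5 : 1 * L ≤ X * (Real.pi / Real.log 2) * L := by
        apply mul_le_mul_of_nonneg_right _ hL0.le
        have h6 : (1:ℝ) ≤ Real.pi / Real.log 2 := by
          rw [le_div_iff₀ hlog2pos]
          linarith
        have h7 := mul_le_mul hX1 h6 zero_le_one (le_trans zero_le_one hX1)
        rw [mul_one] at h7
        exact h7
      calc L = 1 * L := (one_mul L).symm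
        _ ≤ X * (Real.pi / Real.log 2) * L := h5
        _ = X * (Real.pi * L / Real.log 2) := by ring
    calc |vnEntropy ρ - vnEntropy σ| ≤ L := hbnd
      _ ≤ X * (Real.pi * L / Real.log 2) := hc
      _ = ((d:ℝ)) ^ ((1:ℝ)/4) * (Real.pi * L / Real.log 2) * Real.sqrt D := by
          rw [hX]; ring
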